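/- If the uniform distribution on rank functions of a given oriented binary tree t is pushed forward to the rank functions of its underlying (unoriented) tree shape t', then the induced distribution on rank functions of t' is uniform; specifically, every rank function of t' has exactly 2^q preimages among rank functions of t, where q is the number of big symmetric vertices of t. -/

import Mathlib

/-- A rooted binary tree with ordered (left/right) children. -/
inductive OTree : Type
  | leaf : OTree
  | node : OTree → OTree → OTree
deriving DecidableEq

/-- Number of leaves. -/
def OTree.nLeaves : OTree → ℕ
  | .leaf => 1
  | .node l r => l.nLeaves + r.nLeaves

/-- Number of internal nodes. -/
def OTree.nInt : OTree → ℕ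
  | .leaf => 0
  | .node l r => l.nInt + r.nInt + 1

/-- `t.isInt p` : the path `p` (`true` = left) leads to an internal node of `t`. -/
def OTree.isInt : OTree → List Bool → Prop
  | .leaf, _ => False
  | .node _ _, [] => True
  | .node l _, true :: p => l.isInt p
  | .node _ r, false :: p => r.isInt p

/-- `t.isLf p` : the path `p` leads to a leaf of `t`. -/
def OTree.isLf : OTree → List Bool → Prop
  | .leaf, [] => True
  | .leaf, _ :: _ => False
  | .node _ _, [] => False
  | .node l _, true :: p => l.isLf p
  | .node _ r, false :: p => r.isLf p

/-- A ranking of the internal nodes of `t`: a bijection to `{1,…,n-1}` (here `Fin t.nInt`)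
which strictly increases along every root-to-leaf path. -/
structure Ranking (t : OTree) where
  rk : {p : List Bool // t.isInt p} → Fin t.nInt
  bij : Function.Bijective rk
  mono : ∀ p q : {p : List Bool // t.isInt p}, p.1 <+: q.1 → p.1 ≠ q.1 → rk p < rk q

/-- A ranked oriented tree. -/
def RankedOTree := Σ t : OTree, Ranking t

/-- Reorient a tree by swapping the two children at every position `p` with `σ p = true`. -/
def OTree.reorient (σ : List Bool → Bool) : OTree → OTree
  | .leaf => .leaf
  | .node l r =>
    let l' := l.reorient (fun p => σ (true :: p))
    let r' := r.reorient (fun p => σ (false :: p))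
    if σ [] then .node r' l' else .node l' r'

/-- The induced map on paths: position `p` of `t` corresponds to `pmap σ p` of `t.reorient σ`. -/
def pmap (σ : List Bool → Bool) : List Bool → List Bool
  | [] => []
  | b :: p => (xor b (σ [])) :: pmap (fun q => σ (b :: q)) p

/-- Two ranked oriented trees have the same ranked tree shape: some reorientation sends one to
the other, matching ranks. -/
def ShapeRel (x y : RankedOTree) : Prop :=
  ∃ σ : List Bool → Bool, y.1 = x.1.reorient σ ∧
    ∀ (p : {p : List Bool // x.1.isInt p}) (h : y.1.isInt (pmap σ p.1)),
      (y.2.rk ⟨pmap σ p.1, h⟩ : ℕ) = (x.2.rk p : ℕ)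

/-- The subtree rooted at the end of path `p`. -/
def OTree.subtreeAt : OTree → List Bool → OTree
  | t, [] => t
  | .leaf, _ :: _ => .leaf
  | .node l _, true :: p => l.subtreeAt p
  | .node _ r, false :: p => r.subtreeAt p

/-- A ranking-preserving symmetry of the oriented tree `t`: a reorientation fixing `t`, matching
ranks `r1` to `r2`. Rank functions of the underlying tree shape of `t` are the equivalence
classes of rank functions of `t` under these symmetries. -/
def RankShapeRel (t : OTree) (r1 r2 : Ranking t) : Prop :=
  ∃ σ : List Bool → Bool, t.reorient σ = t ∧
    ∀ (p : {p : List Bool // t.isInt p}) (h : t.isInt (pmap σ p.1)),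
      (r2.rk ⟨pmap σ p.1, h⟩ : ℕ) = (r1.rk p : ℕ)

/-- The number of big symmetric vertices of `t`: internal vertices with more than two leaves
below whose two child subtrees have isomorphic unoriented shapes. -/
noncomputable def nBigSym (t : OTree) : ℕ :=
  Nat.card {v : List Bool // t.isInt v ∧ 2 < (t.subtreeAt v).nLeaves ∧
    ∃ l r : OTree, ∃ σ : List Bool → Bool,
      t.subtreeAt v = .node l r ∧ l.reorient σ = r}

/-!
A symmetry of `t` (a reorientation `σ` with `t.reorient σ = t`) permutes the internal vertices,
and the rankings equivalent to a ranking `r₀` are exactly its composites with these permutations.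
As rankings are bijective, distinct permutations give distinct rankings, so every class has as
many elements as there are permutations of internal vertices induced by symmetries. These are
counted by recursion on the tree. At `node l r`, those keeping the two subtrees in place are pairs
of such permutations for `l` and `r`; a symmetry swapping the subtrees exists iff `l` and `r` have
the same shape, and composing with it exchanges swapping and non-swapping ones. So the count
doubles, except when `l` and `r` are leaves, where the swap fixes the only internal vertex.
-/

-- Reorient by `τ`, then by `σ`: the swap bits add up, `σ` being read at the image of a position.
def reorientComp (σ τ : List Bool → Bool) : List Bool → Bool :=
  fun p => xor (τ p) (σ (pmap τ p))

def reorientInv : (List Bool → Bool) → List Bool → Bool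
  | σ, [] => σ []
  | σ, b :: p => reorientInv (fun q => σ (xor b (σ []) :: q)) p

theorem pmap_cons (σ : List Bool → Bool) (b : Bool) (p : List Bool) :
    pmap σ (b :: p) = xor b (σ []) :: pmap (fun q => σ (b :: q)) p := rfl

theorem pmap_false : ∀ p : List Bool, pmap (fun _ => false) p = p
  | [] => rfl
  | b :: p => by simp [pmap_cons, pmap_false p]

theorem reorientComp_nil (σ τ : List Bool → Bool) :
    reorientComp σ τ [] = xor (τ []) (σ []) := rfl

theorem reorientComp_cons (σ τ : List Bool → Bool) (b : Bool) :
    (fun q => reorientComp σ τ (b :: q)) =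
      reorientComp (fun q => σ (xor b (τ []) :: q)) (fun q => τ (b :: q)) := rfl

theorem pmap_reorientComp : ∀ (σ τ : List Bool → Bool) (p : List Bool),
    pmap (reorientComp σ τ) p = pmap σ (pmap τ p)
  | _, _, [] => rfl
  | σ, τ, b :: p => by
    simp only [pmap_cons, reorientComp_nil, reorientComp_cons, Bool.xor_assoc,
      pmap_reorientComp _ _ p]

theorem pmap_injective (σ : List Bool → Bool) : Function.Injective (pmap σ) := by
  intro p q h
  induction p generalizing q σ with
  | nil => cases q <;> simp_all [pmap]
  | cons b p ih =>
    cases q with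
    | nil => simp [pmap] at h
    | cons c q =>
      simp only [pmap_cons, List.cons.injEq, Bool.xor_left_inj] at h
      obtain ⟨rfl, h⟩ := h
      exact congrArg _ (ih _ h)

theorem pmap_append : ∀ (σ : List Bool → Bool) (p q : List Bool),
    pmap σ (p ++ q) = pmap σ p ++ pmap (fun s => σ (p ++ s)) q
  | _, [], _ => rfl
  | σ, b :: p, q => by simp [pmap_cons, pmap_append _ p q]

theorem pmap_prefix (σ : List Bool → Bool) {p q : List Bool} (h : p <+: q) :
    pmap σ p <+: pmap σ q := by
  obtain ⟨s, rfl⟩ := h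
  rw [pmap_append]
  exact List.prefix_append _ _

theorem pmap_pmap_reorientInv : ∀ (σ : List Bool → Bool) (p : List Bool),
    pmap σ (pmap (reorientInv σ) p) = p
  | _, [] => rfl
  | σ, b :: p => by
    simp only [pmap_cons, reorientInv, Bool.xor_assoc, Bool.xor_self, Bool.xor_false]
    exact congrArg _ (pmap_pmap_reorientInv _ p)

theorem pmap_reorientInv_pmap (σ : List Bool → Bool) (p : List Bool) :
    pmap (reorientInv σ) (pmap σ p) = p :=
  pmap_injective σ (pmap_pmap_reorientInv σ _)

theorem apply_pmap_reorientInv : ∀ (σ : List Bool → Bool) (p : List Bool),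
    σ (pmap (reorientInv σ) p) = reorientInv σ p
  | _, [] => rfl
  | σ, b :: p => apply_pmap_reorientInv (fun q => σ (xor b (σ []) :: q)) p

theorem reorientInv_pmap (σ : List Bool → Bool) (p : List Bool) :
    reorientInv σ (pmap σ p) = σ p := by
  conv_rhs => rw [← pmap_reorientInv_pmap σ p]
  exact (apply_pmap_reorientInv σ _).symm

theorem reorientComp_reorientInv_self (σ : List Bool → Bool) :
    reorientComp (reorientInv σ) σ = fun _ => false := by
  funext p
  simp [reorientComp, reorientInv_pmap]

namespace OTree

theorem reorient_false : ∀ t : OTree, t.reorient (fun _ => false) = t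
  | .leaf => rfl
  | .node l r => by simp [reorient, reorient_false l, reorient_false r]

theorem reorient_reorient : ∀ (t : OTree) (σ τ : List Bool → Bool),
    (t.reorient τ).reorient σ = t.reorient (reorientComp σ τ)
  | .leaf, _, _ => rfl
  | .node l r, σ, τ => by
    cases hτ : τ [] <;> cases hσ : σ [] <;>
      simp [reorient, reorientComp_nil, reorientComp_cons, hτ, hσ, reorient_reorient l,
        reorient_reorient r]

theorem reorient_reorientInv {t s : OTree} {σ : List Bool → Bool} (h : t.reorient σ = s) :
    s.reorient (reorientInv σ) = t := by
  rw [← h, reorient_reorient, reorientComp_reorientInv_self, reorient_false]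

theorem isInt_pmap : ∀ (t : OTree) (σ : List Bool → Bool) {p : List Bool},
    t.isInt p → (t.reorient σ).isInt (pmap σ p)
  | .leaf, _, _, h => h.elim
  | .node l r, σ, [], _ => by cases hσ : σ [] <;> simp [reorient, hσ, pmap, isInt]
  | .node l r, σ, true :: p, h => by
    have := isInt_pmap l (fun q => σ (true :: q)) h
    cases hσ : σ [] <;> simpa [reorient, hσ, pmap, isInt] using this
  | .node l r, σ, false :: p, h => by
    have := isInt_pmap r (fun q => σ (false :: q)) h
    cases hσ : σ [] <;> simpa [reorient, hσ, pmap, isInt] using this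

theorem isInt_pmap_of_reorient_eq {t : OTree} {σ : List Bool → Bool} (h : t.reorient σ = t)
    {p : List Bool} (hp : t.isInt p) : t.isInt (pmap σ p) :=
  h ▸ t.isInt_pmap σ hp

abbrev IntPath (t : OTree) := {p : List Bool // t.isInt p}

def intPerm {t : OTree} {σ : List Bool → Bool} (hσ : t.reorient σ = t) : Equiv.Perm t.IntPath where
  toFun p := ⟨pmap σ p.1, isInt_pmap_of_reorient_eq hσ p.2⟩
  invFun p := ⟨pmap (reorientInv σ) p.1, isInt_pmap_of_reorient_eq (reorient_reorientInv hσ) p.2⟩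
  left_inv p := Subtype.ext (pmap_reorientInv_pmap σ p.1)
  right_inv p := Subtype.ext (pmap_pmap_reorientInv σ p.1)

variable {t : OTree}

@[simp] theorem intPerm_apply_coe {σ : List Bool → Bool} (hσ : t.reorient σ = t) (p : t.IntPath) :
    (intPerm hσ p).1 = pmap σ p.1 := rfl

theorem intPerm_false : intPerm t.reorient_false = Equiv.refl t.IntPath :=
  Equiv.ext fun p => Subtype.ext (pmap_false p.1)

theorem intPerm_reorientInv {σ : List Bool → Bool} (hσ : t.reorient σ = t) :
    intPerm (reorient_reorientInv hσ) = (intPerm hσ).symm :=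
  Equiv.ext fun _ => rfl

theorem reorient_reorientComp_eq {σ τ : List Bool → Bool} (hσ : t.reorient σ = t)
    (hτ : t.reorient τ = t) : t.reorient (reorientComp σ τ) = t := by
  rw [← reorient_reorient, hτ, hσ]

theorem intPerm_reorientComp {σ τ : List Bool → Bool} (hσ : t.reorient σ = t)
    (hτ : t.reorient τ = t) :
    intPerm (reorient_reorientComp_eq hσ hτ) = (intPerm hτ).trans (intPerm hσ) :=
  Equiv.ext fun p => Subtype.ext (pmap_reorientComp σ τ p.1)

theorem intPerm_strictPrefix {σ : List Bool → Bool} (hσ : t.reorient σ = t) {p q : t.IntPath}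
    (hpq : p.1 <+: q.1) (hne : p.1 ≠ q.1) :
    (intPerm hσ p).1 <+: (intPerm hσ q).1 ∧ (intPerm hσ p).1 ≠ (intPerm hσ q).1 :=
  ⟨pmap_prefix σ hpq, fun h => hne (pmap_injective σ h)⟩

end OTree

open OTree

theorem Ranking.ext {t : OTree} {r₁ r₂ : Ranking t} (h : r₁.rk = r₂.rk) : r₁ = r₂ := by
  cases r₁; cases r₂; subst h; rfl

def Ranking.comp {t : OTree} (r : Ranking t) {σ : List Bool → Bool} (hσ : t.reorient σ = t) :
    Ranking t where
  rk := r.rk ∘ intPerm hσ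
  bij := r.bij.comp (intPerm hσ).bijective
  mono _ _ hpq hne :=
    have h := intPerm_strictPrefix hσ hpq hne
    r.mono _ _ h.1 h.2

theorem rankShapeRel_iff {t : OTree} {r₁ r₂ : Ranking t} :
    RankShapeRel t r₁ r₂ ↔ ∃ σ, ∃ hσ : t.reorient σ = t, r₂.rk ∘ intPerm hσ = r₁.rk :=
  ⟨fun ⟨σ, hσ, h⟩ => ⟨σ, hσ, funext fun p => Fin.ext (h p _)⟩,
    fun ⟨σ, hσ, h⟩ => ⟨σ, hσ, fun p _ => congrArg Fin.val (congrFun h p)⟩⟩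

theorem rankShapeRel_equivalence (t : OTree) : Equivalence (RankShapeRel t) where
  refl r := rankShapeRel_iff.2 ⟨_, t.reorient_false, by rw [intPerm_false]; rfl⟩
  symm {r₁ r₂} h := by
    obtain ⟨σ, hσ, h⟩ := rankShapeRel_iff.1 h
    refine rankShapeRel_iff.2 ⟨_, reorient_reorientInv hσ, ?_⟩
    rw [intPerm_reorientInv hσ, ← h, Function.comp_assoc, Equiv.self_comp_symm, Function.comp_id]
  trans {r₁ r₂ r₃} h₁₂ h₂₃ := by
    obtain ⟨σ, hσ, h₁₂⟩ := rankShapeRel_iff.1 h₁₂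
    obtain ⟨τ, hτ, h₂₃⟩ := rankShapeRel_iff.1 h₂₃
    refine rankShapeRel_iff.2 ⟨_, reorient_reorientComp_eq hτ hσ, ?_⟩
    rw [intPerm_reorientComp hτ hσ, Equiv.coe_trans, ← Function.comp_assoc, h₂₃, h₁₂]

-- Maps rather than symmetries: swapping two leaves fixes every internal vertex.
def OTree.autMaps (t : OTree) : Set (t.IntPath → t.IntPath) :=
  {f | ∃ σ, ∃ hσ : t.reorient σ = t, ⇑(intPerm hσ) = f}

namespace Ranking

variable {t : OTree}

noncomputable def equiv (r : Ranking t) : t.IntPath ≃ Fin t.nInt :=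
  Equiv.ofBijective r.rk r.bij

theorem equiv_symm_comp_eq {r₀ r : Ranking t} {σ : List Bool → Bool} {hσ : t.reorient σ = t}
    (h : r.rk ∘ intPerm hσ = r₀.rk) : r.equiv.symm ∘ r₀.rk = intPerm hσ := by
  rw [← h]
  funext p
  exact Equiv.ofBijective_symm_apply_apply _ _ _

theorem comp_reorientInv_rk_comp {r₀ : Ranking t} {σ : List Bool → Bool}
    (hσ : t.reorient σ = t) : (r₀.comp (reorient_reorientInv hσ)).rk ∘ intPerm hσ = r₀.rk := by
  simp only [comp, intPerm_reorientInv hσ, Function.comp_assoc, Equiv.symm_comp_self,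
    Function.comp_id]

end Ranking

-- The symmetries act freely on rankings, so `rk ↦ rk⁻¹ ∘ r₀` is a bijection.
theorem ncard_rankShapeRel {t : OTree} (r₀ : Ranking t) :
    {rk | RankShapeRel t r₀ rk}.ncard = t.autMaps.ncard := by
  refine Set.ncard_congr (fun rk _ => rk.equiv.symm ∘ r₀.rk) ?_ ?_ ?_
  · intro rk hrk
    obtain ⟨σ, hσ, h⟩ := rankShapeRel_iff.1 hrk
    exact ⟨σ, hσ, (Ranking.equiv_symm_comp_eq h).symm⟩
  · intro rk₁ rk₂ _ _ h
    have h_symm : rk₁.equiv.symm = rk₂.equiv.symm :=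
      DFunLike.coe_injective (r₀.bij.2.injective_comp_right h)
    exact Ranking.ext (congrArg DFunLike.coe (Equiv.symm_bijective.injective h_symm))
  · rintro _ ⟨σ, hσ, rfl⟩
    have h := Ranking.comp_reorientInv_rk_comp (r₀ := r₀) hσ
    exact ⟨_, rankShapeRel_iff.2 ⟨σ, hσ, h⟩, Ranking.equiv_symm_comp_eq h⟩

theorem card_fiber_eq {t : OTree} (r₀ : Ranking t) :
    Nat.card {rk : Ranking t // Quotient.mk (Relation.EqvGen.setoid (RankShapeRel t)) rk =
      Quotient.mk (Relation.EqvGen.setoid (RankShapeRel t)) r₀} =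
      {rk | RankShapeRel t r₀ rk}.ncard := by
  rw [← Nat.card_coe_set_eq]
  refine Nat.card_congr (Equiv.subtypeEquivRight fun rk => ?_)
  rw [Quotient.eq]
  show Relation.EqvGen _ rk r₀ ↔ _
  rw [(rankShapeRel_equivalence t).eqvGen_iff]
  exact ⟨(rankShapeRel_equivalence t).symm, (rankShapeRel_equivalence t).symm⟩

def listConsSplitEquiv (Q Ql Qr : List Bool → Prop) (C : Prop) (h0 : Q [] ↔ C)
    (ht : ∀ p, Q (true :: p) ↔ Ql p) (hf : ∀ p, Q (false :: p) ↔ Qr p) :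
    {p // Q p} ≃ {_u : Unit // C} ⊕ {p // Ql p} ⊕ {p // Qr p} where
  toFun
    | ⟨[], h⟩ => .inl ⟨(), h0.1 h⟩
    | ⟨true :: q, h⟩ => .inr (.inl ⟨q, (ht q).1 h⟩)
    | ⟨false :: q, h⟩ => .inr (.inr ⟨q, (hf q).1 h⟩)
  invFun
    | .inl ⟨_, h⟩ => ⟨[], h0.2 h⟩
    | .inr (.inl ⟨q, h⟩) => ⟨true :: q, (ht q).2 h⟩
    | .inr (.inr ⟨q, h⟩) => ⟨false :: q, (hf q).2 h⟩
  left_inv x := by rcases x with ⟨_ | ⟨_ | _, q⟩, h⟩ <;> rfl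
  right_inv x := by rcases x with ⟨_, h⟩ | ⟨q, h⟩ | ⟨q, h⟩ <;> rfl

namespace OTree

instance : IsEmpty leaf.IntPath := ⟨fun p => p.2⟩

instance finite_intPath : ∀ t : OTree, Finite t.IntPath
  | .leaf => inferInstance
  | .node l r =>
    have := finite_intPath l
    have := finite_intPath r
    .of_equiv _ (listConsSplitEquiv _ l.isInt r.isInt True Iff.rfl (fun _ => Iff.rfl)
      (fun _ => Iff.rfl)).symm

def IsBigSymAt (t : OTree) (v : List Bool) : Prop :=
  t.isInt v ∧ 2 < (t.subtreeAt v).nLeaves ∧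
    ∃ l r : OTree, ∃ σ : List Bool → Bool, t.subtreeAt v = .node l r ∧ l.reorient σ = r

theorem nBigSym_eq (t : OTree) : nBigSym t = Nat.card {v // t.IsBigSymAt v} := rfl

instance (t : OTree) : Finite {v // t.IsBigSymAt v} :=
  .of_injective _ (Subtype.impEmbedding _ t.isInt fun _ h => h.1).injective

theorem isBigSymAt_node_nil (l r : OTree) :
    (node l r).IsBigSymAt [] ↔ 2 < l.nLeaves + r.nLeaves ∧ ∃ σ, l.reorient σ = r := by
  constructor
  · rintro ⟨-, h2, l', r', σ, ⟨⟩, hσ⟩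
    exact ⟨h2, σ, hσ⟩
  · rintro ⟨h2, σ, hσ⟩
    exact ⟨trivial, h2, l, r, σ, rfl, hσ⟩

theorem nBigSym_leaf : nBigSym leaf = 0 :=
  @Nat.card_of_isEmpty _ ⟨fun v => v.2.1⟩

open scoped Classical in
theorem nBigSym_node (l r : OTree) :
    nBigSym (node l r) = nBigSym l + nBigSym r +
      if 2 < l.nLeaves + r.nLeaves ∧ ∃ σ, l.reorient σ = r then 1 else 0 := by
  rw [nBigSym_eq, nBigSym_eq, nBigSym_eq, Nat.card_congr (listConsSplitEquiv _ l.IsBigSymAt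
    r.IsBigSymAt _ (isBigSymAt_node_nil l r) (fun _ => Iff.rfl) (fun _ => Iff.rfl)),
    Nat.card_sum, Nat.card_sum]
  split_ifs with h
  · simp [h, add_comm]
  · have : IsEmpty {_u : Unit // _} := ⟨fun u => h u.2⟩
    simp [add_comm]

theorem one_le_nLeaves : ∀ t : OTree, 1 ≤ t.nLeaves
  | leaf => le_rfl
  | node l _ => (one_le_nLeaves l).trans (Nat.le_add_right _ _)

theorem two_le_nLeaves {t : OTree} (ht : t ≠ leaf) : 2 ≤ t.nLeaves := by
  cases t with
  | leaf => exact absurd rfl ht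
  | node l r => exact Nat.add_le_add (one_le_nLeaves l) (one_le_nLeaves r)

theorem isInt_nil_of_ne_leaf {t : OTree} (ht : t ≠ leaf) : t.isInt [] := by
  cases t with
  | leaf => exact absurd rfl ht
  | node _ _ => trivial

def nodeOrient (b : Bool) (σl σr : List Bool → Bool) : List Bool → Bool
  | [] => b
  | true :: q => σl q
  | false :: q => σr q

theorem reorient_node_of_false {l r : OTree} {σ : List Bool → Bool} (h₀ : σ [] = false) :
    (node l r).reorient σ =
      node (l.reorient fun q => σ (true :: q)) (r.reorient fun q => σ (false :: q)) := by
  simp [reorient, h₀]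

theorem reorient_node_of_true {l r : OTree} {σ : List Bool → Bool} (h₀ : σ [] = true) :
    (node l r).reorient σ =
      node (r.reorient fun q => σ (false :: q)) (l.reorient fun q => σ (true :: q)) := by
  simp [reorient, h₀]

theorem reorient_node_swap {l r : OTree} {τ : List Bool → Bool} (hτ : l.reorient τ = r) :
    (node l r).reorient (nodeOrient true τ (reorientInv τ)) = node l r := by
  simp [reorient, nodeOrient, hτ, reorient_reorientInv hτ]

theorem id_mem_autMaps (t : OTree) : id ∈ t.autMaps :=
  ⟨_, t.reorient_false, by rw [intPerm_false]; rfl⟩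

theorem ncard_autMaps_of_subsingleton (t : OTree) [Subsingleton t.IntPath] : t.autMaps.ncard = 1 :=
  Set.ncard_eq_one.2 ⟨id, Set.eq_singleton_iff_unique_mem.2
    ⟨id_mem_autMaps t, fun _ _ => Subsingleton.elim _ _⟩⟩

instance : Subsingleton (node leaf leaf).IntPath :=
  ⟨by
    rintro ⟨_ | ⟨_ | _, _⟩, hp⟩ ⟨_ | ⟨_ | _, _⟩, hq⟩ <;>
      first | rfl | exact hp.elim | exact hq.elim⟩

def autMapsRoot (l r : OTree) (b : Bool) : Set ((node l r).IntPath → (node l r).IntPath) :=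
  {f | ∃ σ, ∃ hσ : (node l r).reorient σ = node l r, σ [] = b ∧ ⇑(intPerm hσ) = f}

theorem autMaps_node (l r : OTree) :
    (node l r).autMaps = autMapsRoot l r false ∪ autMapsRoot l r true := by
  ext f
  constructor
  · rintro ⟨σ, hσ, rfl⟩
    cases h₀ : σ []
    · exact .inl ⟨σ, hσ, h₀, rfl⟩
    · exact .inr ⟨σ, hσ, h₀, rfl⟩
  · rintro (⟨σ, hσ, -, rfl⟩ | ⟨σ, hσ, -, rfl⟩) <;> exact ⟨σ, hσ, rfl⟩

theorem disjoint_autMapsRoot {l : OTree} (r : OTree) (hl : l ≠ leaf) :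
    Disjoint (autMapsRoot l r false) (autMapsRoot l r true) := by
  have root_bit : ∀ {b f}, f ∈ autMapsRoot l r b →
      (f ⟨[true], isInt_nil_of_ne_leaf hl⟩).1 = [!b] := by
    rintro b _ ⟨σ, hσ, rfl, rfl⟩
    simp [pmap]
  exact Set.disjoint_left.2 fun f h₁ h₂ => by simpa using (root_bit h₁).symm.trans (root_bit h₂)

theorem autMapsRoot_true_eq_empty {l r : OTree} (hlr : ¬∃ τ, l.reorient τ = r) :
    autMapsRoot l r true = ∅ := by
  refine Set.eq_empty_of_forall_notMem fun _ ⟨σ, hσ, h₀, _⟩ => hlr ⟨fun q => σ (true :: q), ?_⟩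
  rw [reorient_node_of_true h₀] at hσ
  exact (node.inj hσ).2

def nodeMap {l r : OTree} (g : l.IntPath → l.IntPath) (h : r.IntPath → r.IntPath) :
    (node l r).IntPath → (node l r).IntPath
  | ⟨[], hp⟩ => ⟨[], hp⟩
  | ⟨true :: q, hq⟩ => ⟨true :: (g ⟨q, hq⟩).1, (g ⟨q, hq⟩).2⟩
  | ⟨false :: q, hq⟩ => ⟨false :: (h ⟨q, hq⟩).1, (h ⟨q, hq⟩).2⟩

theorem nodeMap_injective {l r : OTree} {g g' : l.IntPath → l.IntPath}
    {h h' : r.IntPath → r.IntPath} (e : nodeMap g h = nodeMap g' h') : g = g' ∧ h = h' := by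
  refine ⟨funext fun p => Subtype.ext ?_, funext fun p => Subtype.ext ?_⟩
  · simpa [nodeMap] using congrArg Subtype.val (congrFun e ⟨true :: p.1, p.2⟩)
  · simpa [nodeMap] using congrArg Subtype.val (congrFun e ⟨false :: p.1, p.2⟩)

theorem intPerm_node_of_false {l r : OTree} {σ : List Bool → Bool}
    (hσ : (node l r).reorient σ = node l r) (h₀ : σ [] = false)
    (hl : l.reorient (fun q => σ (true :: q)) = l)
    (hr : r.reorient (fun q => σ (false :: q)) = r) :
    ⇑(intPerm hσ) = nodeMap (intPerm hl) (intPerm hr) := by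
  funext ⟨p, hp⟩
  rcases p with _ | ⟨_ | _, q⟩ <;> apply Subtype.ext <;> simp [nodeMap, pmap, h₀]

theorem ncard_autMapsRoot_false (l r : OTree) :
    (autMapsRoot l r false).ncard = l.autMaps.ncard * r.autMaps.ncard := by
  rw [← Set.ncard_prod]
  symm
  refine Set.ncard_congr (fun gh _ => nodeMap gh.1 gh.2) ?_ ?_ ?_
  · rintro ⟨_, _⟩ ⟨⟨σl, hl, rfl⟩, ⟨σr, hr, rfl⟩⟩
    have hσ : (node l r).reorient (nodeOrient false σl σr) = node l r := by
      simp [reorient, nodeOrient, hl, hr]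
    exact ⟨_, hσ, rfl, intPerm_node_of_false hσ rfl hl hr⟩
  · rintro ⟨g, h⟩ ⟨g', h'⟩ - - e
    exact Prod.ext_iff.2 (nodeMap_injective e)
  · rintro _ ⟨σ, hσ, h₀, rfl⟩
    have hlr := node.inj ((reorient_node_of_false h₀).symm.trans hσ)
    exact ⟨(intPerm hlr.1, intPerm hlr.2), ⟨⟨_, hlr.1, rfl⟩, ⟨_, hlr.2, rfl⟩⟩,
      (intPerm_node_of_false hσ h₀ hlr.1 hlr.2).symm⟩

-- Right composition with `intPerm hσ₀` is the bijection.
theorem ncard_autMapsRoot_true_of_swap {l r : OTree} {σ₀ : List Bool → Bool}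
    (hσ₀ : (node l r).reorient σ₀ = node l r) (h₀ : σ₀ [] = true) :
    (autMapsRoot l r true).ncard = (autMapsRoot l r false).ncard := by
  refine Set.ncard_congr (fun f _ => f ∘ intPerm hσ₀) ?_ ?_ ?_
  · rintro _ ⟨σ, hσ, h₁, rfl⟩
    refine ⟨_, reorient_reorientComp_eq hσ hσ₀, by simp [reorientComp_nil, h₀, h₁], ?_⟩
    rw [intPerm_reorientComp hσ hσ₀]
    rfl
  · intro f g _ _ e
    exact (intPerm hσ₀).surjective.injective_comp_right e
  · rintro _ ⟨σ, hσ, h₁, rfl⟩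
    refine ⟨_, ⟨_, reorient_reorientComp_eq hσ (reorient_reorientInv hσ₀),
      by simp [reorientComp_nil, reorientInv, h₀, h₁], rfl⟩, ?_⟩
    rw [intPerm_reorientComp hσ (reorient_reorientInv hσ₀), intPerm_reorientInv hσ₀]
    simp [Function.comp_assoc]

theorem ncard_autMaps : ∀ t : OTree, t.autMaps.ncard = 2 ^ nBigSym t
  | leaf => by rw [ncard_autMaps_of_subsingleton, nBigSym_leaf, pow_zero]
  | node l r => by
    by_cases hlr : ∃ τ, l.reorient τ = r
    · obtain ⟨τ, hτ⟩ := hlr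
      rcases eq_or_ne l leaf with rfl | hl
      · obtain rfl : r = leaf := hτ.symm
        rw [ncard_autMaps_of_subsingleton, nBigSym_node, nBigSym_leaf, if_neg (by simp [nLeaves])]
        rfl
      · have hbig : 2 < l.nLeaves + r.nLeaves := by
          have := two_le_nLeaves hl
          have := one_le_nLeaves r
          omega
        rw [autMaps_node, Set.ncard_union_eq (disjoint_autMapsRoot r hl),
          ncard_autMapsRoot_true_of_swap (reorient_node_swap hτ) rfl, ncard_autMapsRoot_false,
          ncard_autMaps l, ncard_autMaps r, nBigSym_node, if_pos ⟨hbig, τ, hτ⟩]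
        ring
    · rw [autMaps_node, autMapsRoot_true_eq_empty hlr, Set.union_empty, ncard_autMapsRoot_false,
        ncard_autMaps l, ncard_autMaps r, nBigSym_node, if_neg fun h => hlr h.2]
      ring

end OTree

/-- pushing the uniform distribution on rank functions of an oriented tree `t`
forward to rank functions of its unoriented shape gives the uniform distribution: every rank
function of the shape (equivalence class of rank functions of `t`) has exactly 2^q preimages,
where q is the number of big symmetric vertices of `t`. -/
theorem stmt14 (t : OTree) (c : Quotient (Relation.EqvGen.setoid (RankShapeRel t))) :
    Nat.card {rk : Ranking t //
        Quotient.mk (Relation.EqvGen.setoid (RankShapeRel t)) rk = c}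
      = 2 ^ nBigSym t := by
  obtain ⟨r₀, rfl⟩ := Quotient.exists_rep c
  rw [card_fiber_eq, ncard_rankShapeRel, OTree.ncard_autMaps]
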